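/- Let q be a harmonic homogeneous polynomial of degree m on ℝ^d and let j be a non-negative integer. If j < m, then q(∇) applied to the function x ↦ ‖x‖^{2j} is identically zero; if j ≥ m, then q(∇) ‖x‖^{2j} = (2^m j! / (j-m)!) ‖x‖^{2j-2m} q(x). -/

import Mathlib

/-!
Write `‖x‖^{2j}` as the polynomial `(∑ xᵢ²)^j` and compute `q(∇)` on polynomials. Since
`[q(∇), xᵢ] = (∂ᵢq)(∇)`, one gets
`q(∇)(‖x‖² p) = ‖x‖² q(∇)p + 2 ∑ xᵢ (∂ᵢq)(∇)p + (Δq)(∇)p`.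
For harmonic `q` the last term vanishes, every `∂ᵢq` is again harmonic and homogeneous of degree
`m - 1`, and Euler's identity `∑ xᵢ ∂ᵢq = m q` closes a double induction on `m` and `j`:
`q(∇)‖x‖^{2j} = 2^m j(j-1)⋯(j-m+1) ‖x‖^{2(j-m)} q`, the descending factorial vanishing for
`j < m`.
Evaluation intertwines formal and analytic partial derivatives, which transfers this to functions.
-/

open MeasureTheory MvPolynomial Finset Metric Topology Asymptotics Real

noncomputable section

/-- Euclidean space `ℝ^d`. -/
abbrev Ed (d : ℕ) := EuclideanSpace ℝ (Fin d)

/-- Multi-index partial derivative on polynomials. -/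
def mpderiv {d : ℕ} (s : Fin d →₀ ℕ) (p : MvPolynomial (Fin d) ℝ) : MvPolynomial (Fin d) ℝ :=
  ((List.finRange d).map (fun j => (fun q : MvPolynomial (Fin d) ℝ => pderiv j q)^[s j])).foldr
    (fun g h => g ∘ h) id p

/-- The constant-coefficient differential operator `q(∇)` acting on polynomials. -/
def dop {d : ℕ} (q p : MvPolynomial (Fin d) ℝ) : MvPolynomial (Fin d) ℝ :=
  (AddMonoidAlgebra.coeff q).sum fun s c => c • mpderiv s p

/-- The Euclidean Laplacian on polynomials. -/
def lap {d : ℕ} (p : MvPolynomial (Fin d) ℝ) : MvPolynomial (Fin d) ℝ :=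
  ∑ j : Fin d, pderiv j (pderiv j p)

/-- First-order partial derivative `∂/∂x_j` on functions. -/
def pdF {d : ℕ} (j : Fin d) (f : Ed d → ℝ) : Ed d → ℝ :=
  fun x => fderiv ℝ f x (EuclideanSpace.single j 1)

/-- Multi-index partial derivative on functions. -/
def mpdF {d : ℕ} (s : Fin d →₀ ℕ) (f : Ed d → ℝ) : Ed d → ℝ :=
  ((List.finRange d).map (fun j => (pdF j)^[s j])).foldr (fun g h => g ∘ h) id f

/-- The operator `q(∇)` acting on smooth functions. -/
def dopF {d : ℕ} (q : MvPolynomial (Fin d) ℝ) (f : Ed d → ℝ) : Ed d → ℝ :=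
  fun x => (AddMonoidAlgebra.coeff q).sum fun s c => c * mpdF s f x

/-- The Euclidean Laplacian on functions. -/
def lapF {d : ℕ} (f : Ed d → ℝ) : Ed d → ℝ :=
  fun x => ∑ j : Fin d, pdF j (pdF j f) x

/-- The surface measure `σ` on the unit sphere `S^{d-1}`. -/
def sphμ (d : ℕ) : Measure (sphere (0 : Ed d) 1) := (volume : Measure (Ed d)).toSphere

/-- The surface area `ω_d` of the unit sphere `S^{d-1}`. -/
def ωd (d : ℕ) : ℝ := ((sphμ d) Set.univ).toReal

/-- The Pochhammer (shifted factorial) symbol `(a)_k`. -/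
def poch (a : ℝ) (k : ℕ) : ℝ := ∏ i ∈ Finset.range k, (a + i)

/-- Evaluation of a polynomial at a point of `ℝ^d`. -/
def evalE {d : ℕ} (p : MvPolynomial (Fin d) ℝ) (x : Ed d) : ℝ := eval (fun j => x j) p

/-- The polynomial `‖x‖² = x_1² + ⋯ + x_d²`. -/
def nsq (d : ℕ) : MvPolynomial (Fin d) ℝ := ∑ j : Fin d, X j ^ 2

theorem MvPolynomial.pderiv_comm {σ R : Type*} [CommRing R] (i j : σ) (p : MvPolynomial σ R) :
    pderiv i (pderiv j p) = pderiv j (pderiv i p) := by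
  classical
  -- the commutator of two derivations is a derivation, and this one kills every `X k`
  have hbracket :
      ⁅pderiv i, pderiv j⁆ = (0 : Derivation R (MvPolynomial σ R) (MvPolynomial σ R)) :=
    MvPolynomial.derivation_ext fun k => by
      rw [Derivation.commutator_apply, pderiv_X, pderiv_X]
      simp [Pi.single_apply, apply_ite]
  have := DFunLike.congr_fun hbracket p
  rwa [Derivation.commutator_apply, Derivation.zero_apply, sub_eq_zero] at this

theorem MvPolynomial.commute_pderiv {σ R : Type*} [CommRing R] (i j : σ) :
    Commute (pderiv i : Derivation R (MvPolynomial σ R) _).toLinearMap (pderiv j).toLinearMap :=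
  LinearMap.ext fun p => pderiv_comm i j p

theorem List.prod_map_pow_add_single {ι M : Type*} [DecidableEq ι] [Monoid M] {f : ι → M}
    {l : List ι} (hl : l.Nodup) {i : ι} (hi : i ∈ l) (hf : ∀ j ∈ l, Commute (f i) (f j))
    (s : ι →₀ ℕ) :
    (l.map fun j => f j ^ (s + Finsupp.single i 1 : ι →₀ ℕ) j).prod
      = f i * (l.map fun j => f j ^ s j).prod := by
  induction l with
  | nil => cases hi
  | cons a l ih =>
    obtain ⟨ha, hl⟩ := List.nodup_cons.mp hl
    rcases eq_or_ne a i with rfl | hai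
    · have hrest : (l.map fun j => f j ^ (s + Finsupp.single a 1 : ι →₀ ℕ) j)
          = l.map fun j => f j ^ s j :=
        List.map_congr_left fun j hj => by
          rw [Finsupp.add_apply, Finsupp.single_eq_of_ne (by rintro rfl; exact ha hj), add_zero]
      rw [List.map_cons, List.map_cons, List.prod_cons, List.prod_cons, hrest, Finsupp.add_apply,
        Finsupp.single_eq_same, pow_succ', mul_assoc]
    · have hi' : i ∈ l := (List.mem_cons.mp hi).resolve_left hai.symm
      rw [List.map_cons, List.map_cons, List.prod_cons, List.prod_cons,
        ih hl hi' fun j hj => hf j (List.mem_cons_of_mem a hj), Finsupp.add_apply,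
        Finsupp.single_eq_of_ne hai, add_zero, ← mul_assoc, ← mul_assoc,
        ((hf a List.mem_cons_self).pow_right _).eq]

theorem Nat.descFactorial_succ_succ_eq_add (j m : ℕ) :
    (j + 1).descFactorial (m + 1) = j.descFactorial (m + 1) + (m + 1) * j.descFactorial m := by
  rw [Nat.succ_descFactorial_succ, Nat.descFactorial_succ, ← add_mul]
  rcases le_or_gt m j with h | h
  · congr 1
    omega
  · simp [Nat.descFactorial_eq_zero_iff_lt.mpr h]

theorem descFactorial_smul_mul_pow_sub {A : Type*} [Semiring A] [Module ℝ A] (a b : A)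
    (j m : ℕ) :
    (j.descFactorial (m + 1) : ℝ) • (a * a ^ (j - (m + 1)) * b)
      = (j.descFactorial (m + 1) : ℝ) • (a ^ (j - m) * b) := by
  -- for `j ≤ m` the truncated exponents differ, but then the coefficient vanishes
  rcases lt_or_ge m j with h | h
  · rw [← pow_succ', show j - (m + 1) + 1 = j - m by omega]
  · rw [Nat.descFactorial_eq_zero_iff_lt.mpr (Nat.lt_succ_of_le h), Nat.cast_zero, zero_smul,
      zero_smul]

section

variable {d : ℕ}

def mpderivEnd (s : Fin d →₀ ℕ) : Module.End ℝ (MvPolynomial (Fin d) ℝ) :=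
  ((List.finRange d).map fun j => (pderiv j).toLinearMap ^ s j).prod

theorem mpderiv_eq_mpderivEnd (s : Fin d →₀ ℕ) : mpderiv s = mpderivEnd s := by
  funext p
  rw [mpderiv, mpderivEnd]
  induction List.finRange d generalizing p with
  | nil => rfl
  | cons a l ih =>
    simp only [List.map_cons, List.foldr_cons, List.prod_cons, Function.comp_apply,
      Module.End.mul_apply, Module.End.pow_apply, ih]
    rfl

@[simp] theorem mpderivEnd_zero : mpderivEnd (0 : Fin d →₀ ℕ) = 1 := by
  simp [mpderivEnd]

theorem mpderivEnd_add_single (s : Fin d →₀ ℕ) (i : Fin d) :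
    mpderivEnd (s + Finsupp.single i 1) = (pderiv i).toLinearMap * mpderivEnd s :=
  List.prod_map_pow_add_single (List.nodup_finRange d) (List.mem_finRange i)
    (fun j _ => commute_pderiv i j) s

theorem commute_pderiv_mpderivEnd (i : Fin d) (s : Fin d →₀ ℕ) :
    Commute (pderiv i).toLinearMap (mpderivEnd s) :=
  Commute.list_prod_right _ _ fun _ hD => by
    obtain ⟨j, -, rfl⟩ := List.mem_map.mp hD
    exact (commute_pderiv i j).pow_right _

def dopHom : MvPolynomial (Fin d) ℝ →+ Module.End ℝ (MvPolynomial (Fin d) ℝ) where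
  toFun q := (AddMonoidAlgebra.coeff q).sum fun s c => c • mpderivEnd s
  map_zero' := Finsupp.sum_zero_index
  map_add' _ _ := Finsupp.sum_add_index' (fun _ => zero_smul ℝ _) fun _ _ _ => add_smul _ _ _

theorem dop_eq_dopHom (q : MvPolynomial (Fin d) ℝ) : dop q = dopHom q := by
  funext p
  simp [dop, dopHom, Finsupp.sum, mpderiv_eq_mpderivEnd]

theorem dopHom_monomial (s : Fin d →₀ ℕ) (c : ℝ) :
    dopHom (monomial s c) = c • mpderivEnd s :=
  sum_monomial_eq (b := fun s c => c • mpderivEnd s) (zero_smul ℝ _)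

theorem dopHom_C (c : ℝ) : dopHom (C c : MvPolynomial (Fin d) ℝ) = c • 1 := by
  rw [C_apply, dopHom_monomial, mpderivEnd_zero]

theorem dopHom_mul_X (q : MvPolynomial (Fin d) ℝ) (j : Fin d) :
    dopHom (q * X j) = dopHom q * (pderiv j).toLinearMap := by
  induction q using MvPolynomial.induction_on' with
  | monomial s c =>
    rw [X, monomial_mul, mul_one, dopHom_monomial, dopHom_monomial, mpderivEnd_add_single,
      (commute_pderiv_mpderivEnd j s).eq, smul_mul_assoc]
  | add q₁ q₂ h₁ h₂ => rw [add_mul, map_add, map_add, h₁, h₂, add_mul]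

theorem dopHom_X_mul (q : MvPolynomial (Fin d) ℝ) (i : Fin d) (p : MvPolynomial (Fin d) ℝ) :
    dopHom q (X i * p) = X i * dopHom q p + dopHom (pderiv i q) p := by
  induction q using MvPolynomial.induction_on generalizing p with
  | C c => simp [dopHom_C]
  | add q₁ q₂ h₁ h₂ =>
    simp only [map_add, LinearMap.add_apply, h₁, h₂, mul_add]
    abel
  | mul_X q j ih =>
    have hδ : dopHom q (pderiv j (X i) * p) = dopHom (q * pderiv i (X j)) p := by
      rcases eq_or_ne i j with rfl | hij
      · simp
      · simp [pderiv_X_of_ne hij, pderiv_X_of_ne hij.symm]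
    simp only [dopHom_mul_X, Module.End.mul_apply, Derivation.coeFn_coe, pderiv_mul,
      map_add, LinearMap.add_apply, ih, hδ]
    abel

theorem lap_pderiv (i : Fin d) (q : MvPolynomial (Fin d) ℝ) :
    lap (pderiv i q) = pderiv i (lap q) := by
  simp only [lap, map_sum, pderiv_comm _ i]

theorem dopHom_nsq_mul (q p : MvPolynomial (Fin d) ℝ) :
    dopHom q (nsq d * p) = nsq d * dopHom q p
      + (2 : ℕ) • ∑ i, X i * dopHom (pderiv i q) p + dopHom (lap q) p := by
  have hnsq : ∀ r : MvPolynomial (Fin d) ℝ, nsq d * r = ∑ i, X i * (X i * r) := fun r => by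
    simp only [nsq, Finset.sum_mul, sq, mul_assoc]
  simp only [hnsq, map_sum, dopHom_X_mul, lap, LinearMap.sum_apply, mul_add,
    Finset.sum_add_distrib]
  abel

theorem dopHom_one_of_isHomogeneous {q : MvPolynomial (Fin d) ℝ} {m : ℕ}
    (hq : q.IsHomogeneous (m + 1)) : dopHom q 1 = 0 := by
  -- Euler: `(m + 1) q = ∑ (∂ᵢ q) Xᵢ`, and a right factor `Xᵢ` acts as `∂ᵢ`, killing `1`
  have h : (m + 1) • dopHom q 1 = 0 := by
    rw [← LinearMap.smul_apply, ← map_nsmul, ← hq.sum_X_mul_pderiv, map_sum,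
      LinearMap.sum_apply]
    refine Finset.sum_eq_zero fun i _ => ?_
    rw [mul_comm, dopHom_mul_X, Module.End.mul_apply, Derivation.coeFn_coe, pderiv_one, map_zero]
  exact (smul_eq_zero.mp h).resolve_left (Nat.succ_ne_zero m)

theorem dopHom_nsq_pow {m : ℕ} {q : MvPolynomial (Fin d) ℝ} (hq : q.IsHomogeneous m)
    (hharm : lap q = 0) (j : ℕ) :
    dopHom q (nsq d ^ j) = (2 ^ m * j.descFactorial m : ℝ) • (nsq d ^ (j - m) * q) := by
  induction m generalizing q j with
  | zero =>
    rw [← totalDegree_zero_iff_isHomogeneous, totalDegree_eq_zero_iff_eq_C] at hq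
    rw [hq, dopHom_C, LinearMap.smul_apply, Module.End.one_apply]
    simp [smul_eq_C_mul, mul_comm]
  | succ m ihm =>
    induction j with
    | zero => simp [dopHom_one_of_isHomogeneous hq]
    | succ j ihj =>
      have hderiv : ∀ i, dopHom (pderiv i q) (nsq d ^ j)
          = (2 ^ m * j.descFactorial m : ℝ) • (nsq d ^ (j - m) * pderiv i q) := fun i =>
        ihm (by simpa using hq.pderiv (i := i)) (by rw [lap_pderiv, hharm, map_zero]) j
      have heuler : ∑ i, X i * (nsq d ^ (j - m) * pderiv i q)
          = ((m + 1 : ℕ) : ℝ) • (nsq d ^ (j - m) * q) := by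
        simp_rw [mul_left_comm (X _), ← Finset.mul_sum, hq.sum_X_mul_pderiv,
          Nat.cast_smul_eq_nsmul, mul_smul_comm]
      rw [pow_succ', dopHom_nsq_mul, hharm, map_zero, LinearMap.zero_apply, add_zero, ihj,
        mul_smul_comm, ← mul_assoc, mul_smul, descFactorial_smul_mul_pow_sub,
        Nat.add_sub_add_right, Nat.descFactorial_succ_succ_eq_add]
      simp only [hderiv, mul_smul_comm, ← Finset.smul_sum, heuler]
      push_cast
      module

theorem hasFDerivAt_evalE (p : MvPolynomial (Fin d) ℝ) (x : Ed d) :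
    HasFDerivAt (evalE p)
      (∑ i, evalE (pderiv i p) x • (EuclideanSpace.proj i : Ed d →L[ℝ] ℝ)) x := by
  induction p using MvPolynomial.induction_on with
  | C a =>
    have hconst : evalE (C a : MvPolynomial (Fin d) ℝ) = fun _ => a := funext fun _ => eval_C a
    simpa [hconst, evalE] using hasFDerivAt_const (𝕜 := ℝ) a x
  | add p q hp hq =>
    have hfun : evalE (p + q) = evalE p + evalE q := funext fun y => by simp [evalE]
    rw [hfun]
    refine (hp.add hq).congr_fderiv ?_
    simp [evalE, add_smul, Finset.sum_add_distrib]
  | mul_X p i hp =>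
    have hfun : evalE (p * X i) = fun y => evalE p y * y i := funext fun y => by simp [evalE]
    rw [hfun]
    refine (hp.mul (EuclideanSpace.proj i : Ed d →L[ℝ] ℝ).hasFDerivAt).congr_fderiv ?_
    ext v
    simp [evalE, pderiv_X, Pi.single_apply, add_mul, Finset.sum_add_distrib, apply_ite,
      Finset.mul_sum, mul_assoc]

theorem pdF_evalE (j : Fin d) (p : MvPolynomial (Fin d) ℝ) :
    pdF j (evalE p) = evalE (pderiv j p) := by
  funext x
  simp [pdF, (hasFDerivAt_evalE p x).fderiv]

theorem semiconj_evalE_pderiv (j : Fin d) :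
    Function.Semiconj evalE (pderiv j : MvPolynomial (Fin d) ℝ → _) (pdF j) :=
  fun p => (pdF_evalE j p).symm

theorem mpdF_evalE (s : Fin d →₀ ℕ) (p : MvPolynomial (Fin d) ℝ) :
    mpdF s (evalE p) = evalE (mpderiv s p) := by
  rw [mpdF, mpderiv]
  induction List.finRange d generalizing p with
  | nil => rfl
  | cons a l ih =>
    simp only [List.map_cons, List.foldr_cons, Function.comp_apply, ih,
      ((semiconj_evalE_pderiv a).iterate_right _).eq]

theorem dopF_evalE (q p : MvPolynomial (Fin d) ℝ) : dopF q (evalE p) = evalE (dop q p) := by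
  funext x
  simp [dopF, dop, Finsupp.sum, mpdF_evalE, evalE]

theorem evalE_nsq_pow (k : ℕ) (x : Ed d) : evalE (nsq d ^ k) x = ‖x‖ ^ (2 * k) := by
  simp [evalE, nsq, pow_mul, EuclideanSpace.real_norm_sq_eq]

end

/-- `q(∇)` applied to `x ↦ ‖x‖^{2j}` for a harmonic homogeneous `q` of degree `m`. -/
theorem stmt6 (d m j : ℕ) (q : MvPolynomial (Fin d) ℝ)
    (hqhom : q.IsHomogeneous m) (hqharm : lap q = 0) :
    (j < m → ∀ x : Ed d, dopF q (fun x : Ed d => ‖x‖ ^ (2 * j)) x = 0) ∧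
    (m ≤ j → ∀ x : Ed d, dopF q (fun x : Ed d => ‖x‖ ^ (2 * j)) x
      = (2 ^ m * (j.factorial : ℝ) / ((j - m).factorial : ℝ)) * ‖x‖ ^ (2 * j - 2 * m)
          * evalE q x) := by
  have hdop : ∀ x, dopF q (fun x : Ed d => ‖x‖ ^ (2 * j)) x
      = 2 ^ m * j.descFactorial m * ‖x‖ ^ (2 * (j - m)) * evalE q x := fun x => by
    simp only [← evalE_nsq_pow, dopF_evalE, dop_eq_dopHom, dopHom_nsq_pow hqhom hqharm]
    simp [evalE, mul_assoc]
  refine ⟨fun hjm x => by simp [hdop, Nat.descFactorial_eq_zero_iff_lt.mpr hjm],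
    fun hmj x => ?_⟩
  have hcast : (j.descFactorial m : ℝ) = j.factorial / (j - m).factorial := by
    rw [eq_div_iff (by positivity), mul_comm]
    exact_mod_cast Nat.factorial_mul_descFactorial hmj
  rw [hdop, hcast, mul_div_assoc, show 2 * j - 2 * m = 2 * (j - m) by omega]
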